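/- arXiv:2210.03617 — 6 statements merged into one kernel-verified Lean document; each statement's English description precedes it below -/
import Mathlib

section
/- For 0 < q ≤ 1 and integers r > 1, s ≥ 0, t ≥ 0, the quantity A_q^k(r,s,t) satisfies the recurrence A_q^k(r,s,t) = Σ_{j=0}^{k-1} q^{(r-1)j} A_q^k(r-1, s-j, t) + Σ_{j=k}^{s} q^{(r-1)j} A_q^k(r-1, s-j, t - ⌊j/k⌋). -/
/-!
Split the sum according to the last coordinate `y_r = j`: it contributes `q^((r-1) j)` to the
weight, `j` to the coordinate sum and `⌊j/k⌋` to the floor sum, so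
`A_q^k(r,s,t) = Σ_{j ≤ s} q^((r-1) j) A_q^k(r-1, s-j, t-⌊j/k⌋)`. For `j < k` the floor vanishes,
and the terms of the first sum with `j > s` are zero because `A_q^k` vanishes at negative
arguments.
-/

open Finset

/-- `A_q^k(r,s,t) = Σ q^(y₂+2y₃+⋯+(r-1)yᵣ)` over nonnegative tuples with
`Σ yᵢ = s` and `Σ ⌊yᵢ/k⌋ = t`. -/
def Aqsum (q : ℝ) (k r s t : ℕ) : ℝ :=
  ∑ y ∈ (Fintype.piFinset fun _ : Fin r => Finset.range (s + 1)).filter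
      (fun y => (∑ i, y i) = s ∧ (∑ i, y i / k) = t),
    q ^ (∑ i : Fin r, (i : ℕ) * y i)

/-- `A_q^k` with integer arguments, vanishing in degenerate (negative) cases. -/
def AqZ (q : ℝ) (k r : ℕ) (s t : ℤ) : ℝ :=
  if 0 ≤ s ∧ 0 ≤ t then Aqsum q k r s.toNat t.toNat else 0

theorem Finset.sum_range_succ_eq_sum_range_add_sum_Icc {M : Type*} [AddCommMonoid M]
    (f : ℕ → M) {k s : ℕ} (hf : ∀ j, s < j → f j = 0) :
    ∑ j ∈ range (s + 1), f j = ∑ j ∈ range k, f j + ∑ j ∈ Icc k s, f j := by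
  rw [← Ico_add_one_right_eq_Icc]
  rcases le_or_gt k (s + 1) with hks | hks
  · rw [sum_range_add_sum_Ico f hks]
  · rw [Ico_eq_empty_of_le hks.le, sum_empty, add_zero, ← sum_range_add_sum_Ico f hks.le,
      sum_eq_zero (s := Ico (s + 1) k) fun j hj => hf j (mem_Ico.1 hj).1, add_zero]

theorem Nat.map_castEmbedding_Icc (a b : ℕ) :
    (Icc a b).map Nat.castEmbedding = Icc (a : ℤ) b := by
  apply coe_injective
  simpa using Nat.image_cast_int_Icc a b

namespace Aqsum

def tuples (k r s t : ℕ) : Finset (Fin r → ℕ) :=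
  (Fintype.piFinset fun _ : Fin r => range (s + 1)).filter
    (fun y => (∑ i, y i) = s ∧ (∑ i, y i / k) = t)

def weight {r : ℕ} (y : Fin r → ℕ) : ℕ :=
  ∑ i : Fin r, (i : ℕ) * y i

theorem mem_tuples {k r s t : ℕ} {y : Fin r → ℕ} :
    y ∈ tuples k r s t ↔ (∑ i, y i) = s ∧ (∑ i, y i / k) = t := by
  simp only [tuples, mem_filter, Fintype.mem_piFinset, mem_range, and_iff_right_iff_imp]
  rintro ⟨rfl, -⟩ i
  exact Nat.lt_succ_of_le (single_le_sum (fun j _ => Nat.zero_le (y j)) (mem_univ i))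

theorem snoc_mem_tuples {k r s t j : ℕ} {z : Fin r → ℕ} :
    (Fin.snoc z j : Fin (r + 1) → ℕ) ∈ tuples k (r + 1) s t ↔
      j ≤ s ∧ j / k ≤ t ∧ z ∈ tuples k r (s - j) (t - j / k) := by
  simp only [mem_tuples, Fin.sum_univ_castSucc, Fin.snoc_castSucc, Fin.snoc_last]
  omega

theorem weight_snoc {r : ℕ} (z : Fin r → ℕ) (j : ℕ) :
    weight (Fin.snoc z j : Fin (r + 1) → ℕ) = weight z + r * j := by
  simp only [weight, Fin.sum_univ_castSucc, Fin.snoc_castSucc, Fin.snoc_last, Fin.val_castSucc,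
    Fin.val_last]

end Aqsum

open Aqsum

theorem Aqsum_eq_sum_tuples (q : ℝ) (k r s t : ℕ) :
    Aqsum q k r s t = ∑ y ∈ tuples k r s t, q ^ weight y :=
  rfl

theorem AqZ_natCast (q : ℝ) (k r s t : ℕ) : AqZ q k r s t = Aqsum q k r s t := by
  simp [AqZ]

theorem AqZ_sub_natCast (q : ℝ) (k r s t j : ℕ) :
    AqZ q k r ((s : ℤ) - j) ((t : ℤ) - j / k) =
      if j ≤ s ∧ j / k ≤ t then Aqsum q k r (s - j) (t - j / k) else 0 := by
  rw [AqZ, ← Int.natCast_div]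
  by_cases h : j ≤ s ∧ j / k ≤ t
  · rw [if_pos (by omega), if_pos h]
    congr 1 <;> omega
  · rw [if_neg (by omega), if_neg h]

theorem Aqsum_succ (q : ℝ) (k r s t : ℕ) :
    Aqsum q k (r + 1) s t =
      ∑ j ∈ range (s + 1), q ^ (r * j) * AqZ q k r ((s : ℤ) - j) ((t : ℤ) - j / k) := by
  simp_rw [AqZ_sub_natCast, mul_ite, mul_zero, ← sum_filter, Aqsum_eq_sum_tuples, mul_sum,
    ← pow_add, sum_sigma']
  refine sum_nbij' (fun y => ⟨y (Fin.last r), Fin.init y⟩) (fun p => Fin.snoc p.2 p.1)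
    ?_ ?_ (fun y _ => Fin.snoc_init_self y) (fun p _ => by simp) ?_
  · intro y hy
    rw [← Fin.snoc_init_self y, snoc_mem_tuples] at hy
    simp only [mem_sigma, mem_filter, mem_range]
    exact ⟨⟨by omega, hy.1, hy.2.1⟩, hy.2.2⟩
  · rintro ⟨j, z⟩ hp
    simp only [mem_sigma, mem_filter, mem_range] at hp
    exact snoc_mem_tuples.2 ⟨hp.1.2.1, hp.1.2.2, hp.2⟩
  · intro y _
    conv_lhs => rw [← Fin.snoc_init_self y]
    rw [weight_snoc, add_comm]

theorem Aq_recurrence_general (q : ℝ) (k r : ℕ)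
    (hr : 1 < r) (s t : ℤ) (hs : 0 ≤ s) (ht : 0 ≤ t) :
    AqZ q k r s t =
      (∑ j ∈ Finset.range k, q ^ ((r - 1) * j) * AqZ q k (r - 1) (s - j) t) +
      ∑ j ∈ Finset.Icc (k : ℤ) s,
        q ^ ((((r : ℤ) - 1) * j).toNat) * AqZ q k (r - 1) (s - j) (t - j / k) := by
  lift s to ℕ using hs
  lift t to ℕ using ht
  obtain ⟨r, rfl⟩ : ∃ r', r = r' + 1 := ⟨r - 1, by omega⟩
  have h_vanish : ∀ j, s < j → q ^ (r * j) * AqZ q k r ((s : ℤ) - j) ((t : ℤ) - j / k) = 0 :=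
    fun j hj => by rw [AqZ_sub_natCast, if_neg (by omega), mul_zero]
  rw [AqZ_natCast, Aqsum_succ, sum_range_succ_eq_sum_range_add_sum_Icc _ h_vanish,
    ← Nat.map_castEmbedding_Icc, sum_map, Nat.add_sub_cancel]
  congr 1
  · refine sum_congr rfl fun j hj => ?_
    rw [← Int.natCast_div, Nat.div_eq_of_lt (mem_range.1 hj), Nat.cast_zero, sub_zero]
  · refine sum_congr rfl fun j _ => ?_
    rw [Nat.castEmbedding_apply, Nat.cast_add, Nat.cast_one, add_sub_cancel_right,
      ← Nat.cast_mul, Int.toNat_natCast]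

theorem Aq_recurrence (q : ℝ) (hq0 : 0 < q) (hq1 : q ≤ 1) (k r : ℕ) (hk : 0 < k)
    (hr : 1 < r) (s t : ℤ) (hs : 0 ≤ s) (ht : 0 ≤ t) :
    AqZ q k r s t =
      (∑ j ∈ Finset.range k, q ^ ((r - 1) * j) * AqZ q k (r - 1) (s - j) t) +
      ∑ j ∈ Finset.Icc (k : ℤ) s,
        q ^ ((((r : ℤ) - 1) * j).toNat) * AqZ q k (r - 1) (s - j) (t - j / k) :=
  Aq_recurrence_general q k r hr s t hs ht
end

section
/- For 0 < q ≤ 1 and integers r > 1, s ≥ tk, t ≤ r, the quantity B_q^k(r,s,t) satisfies the recurrence B_q^k(r,s,t) = Σ_{j=0}^{s-(t-1)k} q^{(r-1)j} B_q^k(r-1, s-j, t - I(j-k)), where I(m) = 1 if m ≥ 0 and I(m) = 0 otherwise. -/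
/-!
Fixing the last coordinate `y_r = j` of a tuple splits off the factor `q^((r-1)j)` and leaves a
tuple of length `r - 1` with sum `s - j` and `t - I(j - k)` entries `≥ k`; this gives the
recurrence with `j` ranging over `0 ≤ j ≤ s`. The terms with `j > s - (t-1)k` vanish, since a
tuple with `t'` entries `≥ k` has sum at least `t'k`.
-/

open Finset

/-- `B_q^k(r,s,t) = Σ q^(y₂+2y₃+⋯+(r-1)yᵣ)` over nonnegative tuples with
`Σ yᵢ = s` and exactly `t` of the `yᵢ` satisfying `yᵢ ≥ k`. -/
def Bqsum (q : ℝ) (k r s t : ℕ) : ℝ :=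
  ∑ y ∈ (Fintype.piFinset fun _ : Fin r => Finset.range (s + 1)).filter
      (fun y => (∑ i, y i) = s ∧ (∑ i, if k ≤ y i then 1 else 0) = t),
    q ^ (∑ i : Fin r, (i : ℕ) * y i)

/-- `B_q^k` with integer arguments, vanishing in degenerate (negative) cases. -/
def BqZ (q : ℝ) (k r : ℕ) (s t : ℤ) : ℝ :=
  if 0 ≤ s ∧ 0 ≤ t then Bqsum q k r s.toNat t.toNat else 0

def BqTuples (k r s t : ℕ) : Finset (Fin r → ℕ) :=
  (Fintype.piFinset fun _ : Fin r => range (s + 1)).filter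
    (fun y => (∑ i, y i) = s ∧ (∑ i, if k ≤ y i then 1 else 0) = t)

lemma Bqsum_eq_sum_BqTuples (q : ℝ) (k r s t : ℕ) :
    Bqsum q k r s t = ∑ y ∈ BqTuples k r s t, q ^ (∑ i : Fin r, (i : ℕ) * y i) :=
  rfl

lemma mem_BqTuples {k r s t : ℕ} {y : Fin r → ℕ} :
    y ∈ BqTuples k r s t ↔ (∑ i, y i) = s ∧ (∑ i, if k ≤ y i then 1 else 0) = t := by
  simp only [BqTuples, mem_filter, Fintype.mem_piFinset, mem_range, and_iff_right_iff_imp]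
  rintro ⟨rfl, -⟩ i
  exact Nat.lt_succ_of_le (single_le_sum (fun _ _ => Nat.zero_le _) (mem_univ i))

lemma count_ge_mul_le_sum {ι : Type*} [Fintype ι] (k : ℕ) (y : ι → ℕ) :
    (∑ i, if k ≤ y i then 1 else 0) * k ≤ ∑ i, y i := by
  rw [sum_mul]
  exact sum_le_sum fun i _ => by split_ifs <;> omega

lemma Bqsum_eq_zero_of_lt_mul (q : ℝ) {k r s t : ℕ} (h : s < t * k) : Bqsum q k r s t = 0 := by
  refine sum_eq_zero fun y hy => absurd h ?_
  obtain ⟨rfl, rfl⟩ := mem_BqTuples.mp hy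
  exact not_lt.mpr (count_ge_mul_le_sum k y)

lemma BqZ_natCast (q : ℝ) (k r s t : ℕ) : BqZ q k r s t = Bqsum q k r s t := by
  simp [BqZ]

lemma BqZ_eq_zero_of_neg (q : ℝ) (k r : ℕ) {s t : ℤ} (h : s < 0 ∨ t < 0) : BqZ q k r s t = 0 :=
  if_neg fun ⟨hs, ht⟩ => by omega

lemma BqZ_eq_zero_of_lt_mul (q : ℝ) (k r : ℕ) {s t : ℤ} (h : s < t * k) : BqZ q k r s t = 0 := by
  by_cases hst : 0 ≤ s ∧ 0 ≤ t
  · lift s to ℕ using hst.1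
    lift t to ℕ using hst.2
    rw [BqZ_natCast, Bqsum_eq_zero_of_lt_mul q (by exact_mod_cast h)]
  · exact if_neg hst

lemma sum_BqTuples_filter_last (q : ℝ) (k r s t j : ℕ) (hj : j ≤ s) :
    ∑ y ∈ (BqTuples k (r + 1) s (t + if k ≤ j then 1 else 0)).filter
        (fun y => y (Fin.last r) = j),
      q ^ (∑ i : Fin (r + 1), (i : ℕ) * y i) =
    q ^ (r * j) * Bqsum q k r (s - j) t := by
  rw [Bqsum_eq_sum_BqTuples, mul_sum]
  refine sum_nbij' Fin.init (fun z => Fin.snoc z j) ?_ ?_ ?_ ?_ ?_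
  · intro y hy
    obtain ⟨hy, rfl⟩ := mem_filter.mp hy
    obtain ⟨hsum, hcount⟩ := mem_BqTuples.mp hy
    rw [Fin.sum_univ_castSucc] at hsum hcount
    exact mem_BqTuples.mpr ⟨by simp only [Fin.init]; omega, Nat.add_right_cancel hcount⟩
  · intro z hz
    rw [mem_BqTuples] at hz
    simp only [mem_filter, mem_BqTuples, Fin.sum_univ_castSucc, Fin.snoc_castSucc, Fin.snoc_last]
    exact ⟨⟨by omega, by rw [hz.2]⟩, trivial⟩
  · intro y hy
    rw [← (mem_filter.mp hy).2]
    exact Fin.snoc_init_self y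
  · intro z _
    exact Fin.init_snoc _ _
  · intro y hy
    rw [← (mem_filter.mp hy).2, Fin.sum_univ_castSucc, pow_add, mul_comm]
    simp [Fin.init]

lemma Bqsum_succ (q : ℝ) (k r s t : ℕ) :
    Bqsum q k (r + 1) s t =
      ∑ j ∈ range (s + 1),
        q ^ (r * j) * BqZ q k r ((s : ℤ) - j) ((t : ℤ) - if k ≤ j then 1 else 0) := by
  rw [Bqsum_eq_sum_BqTuples,
    ← sum_fiberwise_of_maps_to (g := fun y => y (Fin.last r)) (t := range (s + 1))]
  · refine sum_congr rfl fun j hj => ?_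
    have hjs : j ≤ s := Nat.lt_succ_iff.mp (mem_range.mp hj)
    rw [show (s : ℤ) - j = ((s - j : ℕ) : ℤ) by omega]
    by_cases hI : (if k ≤ j then 1 else 0) ≤ t
    · obtain ⟨t', rfl⟩ := Nat.exists_eq_add_of_le' hI
      rw [show ((t' + (if k ≤ j then 1 else 0) : ℕ) : ℤ) - (if k ≤ j then 1 else 0) = t' by
        push_cast; ring, BqZ_natCast, sum_BqTuples_filter_last q k r s t' j hjs]
    · have hkj : k ≤ j ∧ t = 0 := by split_ifs at hI <;> omega
      rw [BqZ_eq_zero_of_neg _ _ _ (Or.inr (by simp [hkj])), mul_zero]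
      refine sum_eq_zero fun y hy => absurd (mem_filter.mp hy) ?_
      rintro ⟨hmem, rfl⟩
      have hcount := (mem_BqTuples.mp hmem).2
      simp only [hkj.2, sum_eq_zero_iff, mem_univ, ite_eq_right_iff, true_imp_iff] at hcount
      exact one_ne_zero (hcount _ hkj.1)
  · intro y hy
    rw [mem_range, Nat.lt_succ_iff, ← (mem_BqTuples.mp hy).1]
    exact single_le_sum (fun _ _ => Nat.zero_le _) (mem_univ _)

lemma BqZ_succ (q : ℝ) (k r : ℕ) (s t : ℤ) :
    BqZ q k (r + 1) s t =
      ∑ j ∈ Icc 0 s,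
        q ^ (((r : ℤ) * j).toNat) * BqZ q k r (s - j) (t - if (k : ℤ) ≤ j then 1 else 0) := by
  by_cases hst : 0 ≤ s ∧ 0 ≤ t
  · lift s to ℕ using hst.1
    lift t to ℕ using hst.2
    rw [BqZ_natCast, Bqsum_succ]
    refine sum_nbij' (fun n : ℕ => (n : ℤ)) Int.toNat ?_ ?_ ?_ ?_ ?_
    · intro n hn
      simp only [mem_range, mem_Icc] at hn ⊢
      omega
    · intro j hj
      simp only [mem_range, mem_Icc] at hj ⊢
      omega
    · exact fun n _ => Int.toNat_natCast n
    · exact fun j hj => Int.toNat_of_nonneg (mem_Icc.mp hj).1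
    · intro n _
      simp only [← Nat.cast_mul, Int.toNat_natCast, Nat.cast_le]
  · rw [BqZ_eq_zero_of_neg _ _ _ (by omega)]
    refine (sum_eq_zero fun j hj => ?_).symm
    rw [BqZ_eq_zero_of_neg _ _ _ (by split_ifs <;> simp at hj <;> omega), mul_zero]

lemma sum_Icc_eq_sum_Icc_of_eq_zero {M : Type*} [AddCommMonoid M] {f : ℤ → M} {a b c : ℤ}
    (hb : ∀ j, b < j → f j = 0) (hc : ∀ j, c < j → f j = 0) :
    ∑ j ∈ Icc a b, f j = ∑ j ∈ Icc a c, f j := by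
  have hmin : ∀ d, min b c ≤ d → ∑ j ∈ Icc a (min b c), f j = ∑ j ∈ Icc a d, f j :=
    fun d hd => sum_subset (Icc_subset_Icc_right hd) fun j hjd hj =>
      (min_lt_iff.mp (lt_of_not_ge fun h => hj (mem_Icc.mpr ⟨(mem_Icc.mp hjd).1, h⟩))).elim
        (hb j) (hc j)
  rw [← hmin b (min_le_left b c), hmin c (min_le_right b c)]

theorem Bq_recurrence_general (q : ℝ) (k r : ℕ)
    (hr : 1 < r) (s t : ℤ) :
    BqZ q k r s t =
      ∑ j ∈ Finset.Icc (0 : ℤ) (s - (t - 1) * k),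
        q ^ ((((r : ℤ) - 1) * j).toNat) *
          BqZ q k (r - 1) (s - j) (t - if (k : ℤ) ≤ j then 1 else 0) := by
  obtain ⟨r, rfl⟩ : ∃ r', r = r' + 1 := ⟨r - 1, by omega⟩
  rw [BqZ_succ, Nat.add_sub_cancel, Nat.cast_add, Nat.cast_one, add_sub_cancel_right]
  refine sum_Icc_eq_sum_Icc_of_eq_zero (fun j hj => ?_) (fun j hj => ?_)
  · rw [BqZ_eq_zero_of_neg _ _ _ (Or.inl (by omega)), mul_zero]
  · rw [BqZ_eq_zero_of_lt_mul, mul_zero]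
    split_ifs <;> nlinarith

theorem Bq_recurrence (q : ℝ) (hq0 : 0 < q) (hq1 : q ≤ 1) (k r : ℕ) (hk : 0 < k)
    (hr : 1 < r) (s t : ℤ) (hs : t * k ≤ s) (ht : t ≤ (r : ℤ)) :
    BqZ q k r s t =
      ∑ j ∈ Finset.Icc (0 : ℤ) (s - (t - 1) * k),
        q ^ ((((r : ℤ) - 1) * j).toNat) *
          BqZ q k (r - 1) (s - j) (t - if (k : ℤ) ≤ j then 1 else 0) :=
  Bq_recurrence_general q k r hr s t
end

section
/- The number of nonnegative integer solutions (y_1,...,y_r) of y_1 + ... + y_r = s for which exactly t of the y_i satisfy y_i ≥ k equals C(r,t) · H_{r-t}(s - tk, r, k-1), where H_m(α, r, k) = Σ_{j=0}^{⌊α/(k+1)⌋} (-1)^j C(m, j) C(α - (k+1)j + r - 1, α - (k+1)j). -/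
/-!
Sort the solutions by the set `T` of cells holding at least `k` balls; there are `C(r, t)`
choices of `T` with `#T = t`. Removing `k` balls from each cell of `T` is a bijection from the
solutions with large set exactly `T` onto the solutions of total `s - t k` whose cells outside
`T` hold at most `k - 1` balls, and these are counted by inclusion–exclusion over the cells
outside `T` that overflow, each term being a stars-and-bars count.
-/

open Finset

/-- `H_m(α,r,k)`: number of allocations of `α` balls into `r` cells in which each of `m`
specified cells receives at most `k` balls. -/
def Hfun (m a r k : ℕ) : ℤ :=
  ∑ j ∈ Finset.range (a / (k + 1) + 1),
    (-1) ^ j * (m.choose j : ℤ) * ((a - (k + 1) * j + r - 1).choose (a - (k + 1) * j) : ℤ)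

theorem card_filter_forall_not_eq_sum_powerset {α ι : Type*} [DecidableEq ι] (P : Finset α)
    (S : Finset ι) (q : ι → α → Prop) [∀ i, DecidablePred (q i)] :
    (#{a ∈ P | ∀ i ∈ S, ¬ q i a} : ℤ) =
      ∑ T ∈ S.powerset, (-1) ^ #T * (#{a ∈ P | ∀ i ∈ T, q i a} : ℤ) := by
  have hind : ∀ a, (if ∀ i ∈ S, ¬ q i a then 1 else 0 : ℤ) =
      ∏ i ∈ S, (1 - if q i a then 1 else 0) := by
    intro a
    rw [← prod_boole]
    refine prod_congr rfl fun i _ => ?_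
    split_ifs <;> simp
  simp_rw [natCast_card_filter, hind, prod_sub, prod_const_one, mul_one, prod_boole,
    sum_comm (s := P), mul_sum]

theorem Hfun_eq_sum_range (m a r k : ℕ) :
    Hfun m a r k = ∑ j ∈ range (m + 1), m.choose j • ((-1) ^ j *
      if (k + 1) * j ≤ a then ((a - (k + 1) * j + r - 1).choose (a - (k + 1) * j) : ℤ)
      else 0) := by
  set g : ℕ → ℤ := fun j => m.choose j • ((-1) ^ j *
    if (k + 1) * j ≤ a then ((a - (k + 1) * j + r - 1).choose (a - (k + 1) * j) : ℤ) else 0)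
    with hg
  have hk : 0 < k + 1 := k.succ_pos
  have hvanish_choose : ∀ j ≥ m + 1, g j = 0 := fun j hj => by
    simp [hg, Nat.choose_eq_zero_of_lt (show m < j by omega)]
  have hvanish_large : ∀ j ≥ a / (k + 1) + 1, g j = 0 := fun j hj => by
    have : a < (k + 1) * j := by
      rw [mul_comm]; exact (Nat.div_lt_iff_lt_mul hk).1 (by omega)
    simp [hg, this.not_ge]
  rw [← eventually_constant_sum hvanish_choose (Nat.le_add_right _ (a / (k + 1))),
    eventually_constant_sum hvanish_large (by omega), Hfun]
  refine sum_congr rfl fun j hj => ?_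
  have : (k + 1) * j ≤ a := by
    rw [mul_comm]; exact (Nat.le_div_iff_mul_le hk).1 (Nat.lt_succ_iff.1 (mem_range.1 hj))
  simp only [hg, this, if_true, nsmul_eq_mul]
  ring

section

variable {ι : Type*} [Fintype ι] [DecidableEq ι]

theorem card_piAntidiag_univ (n : ℕ) :
    #(piAntidiag (univ : Finset ι) n) = (n + Fintype.card ι - 1).choose n := by
  rw [← map_sym_eq_piAntidiag, card_map, add_comm, ← Sym.card_sym_eq_choose, ← card_univ]
  congr
  ext m
  simp

theorem sum_ite_mem_univ (T : Finset ι) (k : ℕ) :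
    ∑ i, (if i ∈ T then k else 0) = k * #T := by
  rw [sum_ite_mem, univ_inter, sum_const, smul_eq_mul, mul_comm]

theorem map_addRightEmbedding_piAntidiag_univ (T : Finset ι) (k n : ℕ) :
    (piAntidiag (univ : Finset ι) n).map (addRightEmbedding fun i => if i ∈ T then k else 0) =
      {y ∈ piAntidiag (univ : Finset ι) (n + k * #T) | ∀ i ∈ T, k ≤ y i} := by
  ext y
  simp only [mem_map, mem_filter, mem_piAntidiag, mem_univ, implies_true, and_true,
    addRightEmbedding_apply]
  constructor
  · rintro ⟨z, hz, rfl⟩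
    refine ⟨?_, fun i hi => by simp [hi]⟩
    rw [← sum_ite_mem_univ, ← hz, ← sum_add_distrib]
    rfl
  · rintro ⟨hy, hT⟩
    have hle : (fun i => if i ∈ T then k else 0) ≤ y := fun i => by
      by_cases hi : i ∈ T <;> simp [hT, hi]
    refine ⟨y - fun i => if i ∈ T then k else 0, ?_, tsub_add_cancel_of_le hle⟩
    calc ∑ i, (y i - if i ∈ T then k else 0)
        = ∑ i, y i - ∑ i, (if i ∈ T then k else 0) := sum_tsub_distrib _ fun i _ => hle i
      _ = n := by rw [hy, sum_ite_mem_univ, Nat.add_sub_cancel]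

theorem card_piAntidiag_univ_filter_forall_le (T : Finset ι) (k a : ℕ) :
    #{y ∈ piAntidiag (univ : Finset ι) a | ∀ i ∈ T, k ≤ y i} =
      if k * #T ≤ a then (a - k * #T + Fintype.card ι - 1).choose (a - k * #T) else 0 := by
  split_ifs with h
  · obtain ⟨n, rfl⟩ : ∃ n, a = n + k * #T := ⟨a - k * #T, by omega⟩
    rw [← map_addRightEmbedding_piAntidiag_univ, card_map, card_piAntidiag_univ,
      Nat.add_sub_cancel]
  · refine card_eq_zero.2 <| filter_eq_empty_iff.2 fun y hy hT => h ?_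
    rw [mem_piAntidiag] at hy
    calc k * #T = #T • k := by rw [smul_eq_mul, mul_comm]
      _ ≤ ∑ i ∈ T, y i := card_nsmul_le_sum _ _ _ hT
      _ ≤ ∑ i, y i := sum_le_sum_of_subset (subset_univ T)
      _ = a := hy.1

theorem card_piAntidiag_univ_filter_eq (T : Finset ι) (k n : ℕ) :
    #{y ∈ piAntidiag (univ : Finset ι) (n + k * #T) | ({i | k ≤ y i} : Finset ι) = T} =
      #{z ∈ piAntidiag (univ : Finset ι) n | ∀ i ∉ T, z i < k} := by
  have hlarge :
      {y ∈ piAntidiag (univ : Finset ι) (n + k * #T) | ({i | k ≤ y i} : Finset ι) = T} =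
      {y ∈ (piAntidiag univ n).map (addRightEmbedding fun i => if i ∈ T then k else 0) |
        ({i | k ≤ y i} : Finset ι) = T} := by
    rw [map_addRightEmbedding_piAntidiag_univ, filter_filter]
    refine filter_congr fun y _ => ⟨fun hy => ⟨fun i hi => ?_, hy⟩, And.right⟩
    simpa [← hy] using hi
  rw [hlarge, filter_map, card_map]
  congr 1
  refine filter_congr fun z _ => ?_
  simp only [Function.comp_apply, addRightEmbedding_apply, Finset.ext_iff, mem_filter, mem_univ,
    true_and, Pi.add_apply]
  refine forall_congr' fun i => ?_
  by_cases hi : i ∈ T <;> simp [hi]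

theorem card_piAntidiag_univ_filter_forall_apply_le (S : Finset ι) (k a : ℕ) :
    (#{y ∈ piAntidiag (univ : Finset ι) a | ∀ i ∈ S, y i ≤ k} : ℤ) =
      Hfun #S a (Fintype.card ι) k := by
  -- `convert` bridges two `Decidable` instances for `∀ i ∈ S, _`: with `Fintype ι` in scope,
  -- elaboration picks `Fintype.decidableForallFintype` instead of the `Finset` one.
  have hIE : (#{y ∈ piAntidiag (univ : Finset ι) a | ∀ i ∈ S, y i ≤ k} : ℤ) =
      ∑ T ∈ S.powerset, (-1) ^ #T *
        (#{y ∈ piAntidiag (univ : Finset ι) a | ∀ i ∈ T, k + 1 ≤ y i} : ℤ) := by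
    convert card_filter_forall_not_eq_sum_powerset (piAntidiag univ a) S
      (fun i (y : ι → ℕ) => k + 1 ≤ y i) using 6
    omega
  rw [hIE, Hfun_eq_sum_range, ← sum_powerset_apply_card]
  refine sum_congr rfl fun T _ => ?_
  rw [card_piAntidiag_univ_filter_forall_le]
  push_cast
  rfl

theorem card_piAntidiag_univ_filter_eq_eq_Hfun (T : Finset ι) (k n : ℕ) :
    (#{y ∈ piAntidiag (univ : Finset ι) (n + (k + 1) * #T) |
        ({i | k + 1 ≤ y i} : Finset ι) = T} : ℤ) =
      Hfun (Fintype.card ι - #T) n (Fintype.card ι) k := by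
  rw [card_piAntidiag_univ_filter_eq, ← card_compl,
    ← card_piAntidiag_univ_filter_forall_apply_le]
  congr 2
  exact filter_congr fun z _ => by simp

end

theorem B1_count_eq (k r s t : ℕ) (hk : 0 < k) (hts : t * k ≤ s) :
    ((((Fintype.piFinset fun _ : Fin r => Finset.range (s + 1)).filter
        (fun y => (∑ i, y i) = s ∧ (∑ i, if k ≤ y i then 1 else 0) = t)).card : ℤ)) =
      (r.choose t : ℤ) * Hfun (r - t) (s - t * k) r (k - 1) := by
  obtain ⟨k, rfl⟩ : ∃ k', k = k' + 1 := ⟨k - 1, by omega⟩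
  set large : (Fin r → ℕ) → Finset (Fin r) := fun y => {i | k + 1 ≤ y i}
  have hcompositions : (Fintype.piFinset fun _ : Fin r => range (s + 1)).filter
      (fun y => (∑ i, y i) = s ∧ (∑ i, if k + 1 ≤ y i then 1 else 0) = t) =
      {y ∈ piAntidiag (univ : Finset (Fin r)) s | large y ∈ powersetCard t univ} := by
    ext y
    simp only [mem_filter, Fintype.mem_piFinset, mem_range, mem_piAntidiag, mem_powersetCard_univ,
      ← card_filter, large, mem_univ, implies_true, and_true]
    exact and_iff_right_of_imp fun ⟨hy, _⟩ i =>
      hy ▸ Nat.lt_succ_of_le (single_le_sum (by simp) (mem_univ i))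
  have hfiber : ∀ T ∈ powersetCard t univ,
      (#{y ∈ {y ∈ piAntidiag (univ : Finset (Fin r)) s | large y ∈ powersetCard t univ} |
        large y = T} : ℤ) = Hfun (r - t) (s - t * (k + 1)) r k := by
    intro T hT
    rw [mem_powersetCard_univ] at hT
    rw [filter_filter, filter_congr (q := fun y => large y = T) fun y _ =>
      and_iff_right_of_imp fun h => mem_powersetCard_univ.2 (h ▸ hT), ← Nat.sub_add_cancel hts,
      mul_comm t, ← hT, card_piAntidiag_univ_filter_eq_eq_Hfun, Fintype.card_fin,
      Nat.add_sub_cancel]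
  rw [hcompositions, card_eq_sum_card_fiberwise fun y hy => mem_coe.2 (mem_filter.1 hy).2,
    Nat.cast_sum, sum_congr rfl hfiber, sum_const,
    card_powersetCard, card_univ, Fintype.card_fin, nsmul_eq_mul, Nat.add_sub_cancel]
end

section
/- For 0 < q ≤ 1 and integers r > 1, s ≥ 0, t ≥ 0, the quantity C_q^k(r,s,t) satisfies C_q^k(r,s,t) = Σ_{j=0}^{k-1} q^{(r-1)j} C_q^k(r-1, s-j, t) + Σ_{j=k}^{s} q^{(r-1)j} C_q^k(r-1, s-j, t-j+k-1). -/
open Finset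

/-- `C_q^k(r,s,t) = Σ q^(y₂+2y₃+⋯+(r-1)yᵣ)` over nonnegative tuples with
`Σ yᵢ = s` and `Σ C(yᵢ) = t`, where `C(j) = j - k + 1` if `j ≥ k` and `0` otherwise
(here `j - (k-1)` in truncated ℕ-subtraction). -/
def Cqsum (q : ℝ) (k r s t : ℕ) : ℝ :=
  ∑ y ∈ (Fintype.piFinset fun _ : Fin r => Finset.range (s + 1)).filter
      (fun y => (∑ i, y i) = s ∧ (∑ i, (y i - (k - 1))) = t),
    q ^ (∑ i : Fin r, (i : ℕ) * y i)

/-- `C_q^k` with integer arguments, vanishing in degenerate (negative) cases. -/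
def CqZ (q : ℝ) (k r : ℕ) (s t : ℤ) : ℝ :=
  if 0 ≤ s ∧ 0 ≤ t then Cqsum q k r s.toNat t.toNat else 0

/-
Split off the last coordinate `j = y_r` of a tuple: it adds `(r-1)j` to the exponent, `j` to the
sum and `C(j)` to the `C`-sum, so the remaining tuples are counted by `C_q^k(r-1, s-j, t-C(j))`,
with `C(j) = 0` for `j < k` and `C(j) = j-k+1` for `j ≥ k`.
-/

lemma Fintype.sum_piFinset_const_fin_succ {α M : Type*} [AddCommMonoid M] {m : ℕ}
    (S : Finset α) (f : (Fin (m + 1) → α) → M) :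
    ∑ y ∈ Fintype.piFinset (fun _ : Fin (m + 1) => S), f y =
      ∑ a ∈ S, ∑ z ∈ Fintype.piFinset (fun _ : Fin m => S), f (Fin.snoc z a) := by
  rw [← filter_true_of_mem (fun _ _ => trivial) (s := Fintype.piFinset _),
    filter_piFinset_eq_map_snocEquiv _ (fun _ => True), sum_map, sum_product]
  simp only [filter_true]
  rfl

lemma Int.sum_Icc_natCast {M : Type*} [AddCommMonoid M] (f : ℤ → M) (a b : ℕ) :
    ∑ j ∈ Icc (a : ℤ) b, f j = ∑ j ∈ Icc a b, f j := by
  refine Eq.trans ?_ (sum_map (Icc a b) Nat.castEmbedding f)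
  congr 1
  ext x
  simp only [mem_Icc, mem_map, Nat.castEmbedding_apply]
  constructor
  · intro h; exact ⟨x.toNat, by omega, by omega⟩
  · rintro ⟨n, hn, rfl⟩; omega

section
variable (q : ℝ) (k : ℕ)

lemma CqZ_eq_zero_of_neg {r : ℕ} {s : ℤ} (t : ℤ) (hs : s < 0) : CqZ q k r s t = 0 :=
  if_neg fun h => by omega

lemma CqZ_natCast (r s t : ℕ) : CqZ q k r s t = Cqsum q k r s t := by
  simp [CqZ]

/- Entries of a tuple with sum `s` are at most `s`, so the box may be enlarged; a box common to
all the `C_q^k(r-1, s-j, ·)` is what lets the last coordinate be split off. -/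
lemma Cqsum_eq_sum_piFinset_range {r s N : ℕ} (t : ℕ) (h : s ≤ N) :
    Cqsum q k r s t = ∑ y ∈ Fintype.piFinset (fun _ : Fin r => range (N + 1)),
      if (∑ i, y i) = s ∧ (∑ i, (y i - (k - 1))) = t then q ^ (∑ i : Fin r, (i : ℕ) * y i)
      else 0 := by
  rw [← sum_filter, Cqsum]
  refine sum_congr ?_ fun _ _ => rfl
  ext y
  simp only [mem_filter, Fintype.mem_piFinset, mem_range, and_congr_left_iff, and_imp]
  intro hs _
  have hle : ∀ i, y i ≤ s := fun i =>
    hs ▸ single_le_sum (fun i _ => Nat.zero_le (y i)) (mem_univ i)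
  exact ⟨fun _ i => by have := hle i; omega, fun _ i => by have := hle i; omega⟩

lemma CqZ_natCast_sub (r s t a b : ℕ) :
    CqZ q k r ((s : ℤ) - a) ((t : ℤ) - b) =
      if a ≤ s ∧ b ≤ t then Cqsum q k r (s - a) (t - b) else 0 := by
  by_cases h : a ≤ s ∧ b ≤ t
  · rw [if_pos h, ← Nat.cast_sub h.1, ← Nat.cast_sub h.2, CqZ_natCast]
  · rw [if_neg h, CqZ, if_neg (by omega)]

lemma sum_piFinset_snoc_eq_mul_CqZ (m : ℕ) {s N : ℕ} (t a : ℕ) (h : s ≤ N) :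
    ∑ z ∈ Fintype.piFinset (fun _ : Fin m => range (N + 1)),
      (if (∑ i, (Fin.snoc z a : Fin (m + 1) → ℕ) i) = s ∧
          (∑ i, ((Fin.snoc z a : Fin (m + 1) → ℕ) i - (k - 1))) = t
        then q ^ (∑ i : Fin (m + 1), (i : ℕ) * (Fin.snoc z a : Fin (m + 1) → ℕ) i) else 0) =
      q ^ (m * a) * CqZ q k m ((s : ℤ) - a) ((t : ℤ) - (a - (k - 1) : ℕ)) := by
  simp only [Fin.sum_univ_castSucc, Fin.snoc_castSucc, Fin.snoc_last, Fin.val_castSucc,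
    Fin.val_last]
  rw [CqZ_natCast_sub]
  split_ifs with hst
  · rw [Cqsum_eq_sum_piFinset_range q k _ (by omega : s - a ≤ N), mul_sum]
    refine sum_congr rfl fun z _ => ?_
    rw [mul_ite, mul_zero, pow_add, mul_comm]
    exact if_congr (and_congr (by omega) (by omega)) rfl rfl
  · rw [mul_zero]
    exact sum_eq_zero fun z _ => if_neg (by omega)

lemma Cqsum_succ (m : ℕ) {s N : ℕ} (t : ℕ) (h : s ≤ N) :
    Cqsum q k (m + 1) s t =
      ∑ a ∈ range (N + 1),
        q ^ (m * a) * CqZ q k m ((s : ℤ) - a) ((t : ℤ) - (a - (k - 1) : ℕ)) := by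
  rw [Cqsum_eq_sum_piFinset_range q k t h, Fintype.sum_piFinset_const_fin_succ]
  exact sum_congr rfl fun a _ => sum_piFinset_snoc_eq_mul_CqZ q k m t a h

end

theorem Cq_recurrence_general (q : ℝ) (k r : ℕ) (hk : 0 < k)
    (hr : 1 < r) (s t : ℤ) (hs : 0 ≤ s) (ht : 0 ≤ t) :
    CqZ q k r s t =
      (∑ j ∈ Finset.range k, q ^ ((r - 1) * j) * CqZ q k (r - 1) (s - j) t) +
      ∑ j ∈ Finset.Icc (k : ℤ) s,
        q ^ ((((r : ℤ) - 1) * j).toNat) * CqZ q k (r - 1) (s - j) (t - j + k - 1) := by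
  obtain ⟨m, rfl⟩ : ∃ m, r = m + 1 := ⟨r - 1, by omega⟩
  lift s to ℕ using hs
  lift t to ℕ using ht
  -- with the box `range (s + k + 1)` the sum splits at `k`, and the terms with `j > s` vanish
  rw [CqZ_natCast, Cqsum_succ q k m t (by omega : s ≤ s + k),
    ← sum_range_add_sum_Ico _ (by omega : k ≤ s + k + 1), Int.sum_Icc_natCast,
    Nat.add_sub_cancel]
  congr 1
  · refine sum_congr rfl fun j hj => ?_
    rw [mem_range] at hj
    rw [Nat.sub_eq_zero_of_le (by omega), Nat.cast_zero, sub_zero]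
  · symm
    refine sum_subset_zero_on_sdiff (fun j hj => ?_) (fun j hj => ?_) (fun j hj => ?_)
    · simp only [mem_Icc, mem_Ico] at hj ⊢
      omega
    · simp only [mem_sdiff, mem_Icc, mem_Ico] at hj
      rw [CqZ_eq_zero_of_neg q k _ (by omega), mul_zero]
    · simp only [mem_Icc] at hj
      have hexp : (((m + 1 : ℕ) : ℤ) - 1) * (j : ℤ) = ((m * j : ℕ) : ℤ) := by
        push_cast; ring
      have hC : ((j - (k - 1) : ℕ) : ℤ) = j - k + 1 := by omega
      rw [hexp, Int.toNat_natCast, hC]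
      congr 2
      ring

theorem Cq_recurrence (q : ℝ) (hq0 : 0 < q) (hq1 : q ≤ 1) (k r : ℕ) (hk : 0 < k)
    (hr : 1 < r) (s t : ℤ) (hs : 0 ≤ s) (ht : 0 ≤ t) :
    CqZ q k r s t =
      (∑ j ∈ Finset.range k, q ^ ((r - 1) * j) * CqZ q k (r - 1) (s - j) t) +
      ∑ j ∈ Finset.Icc (k : ℤ) s,
        q ^ ((((r : ℤ) - 1) * j).toNat) * CqZ q k (r - 1) (s - j) (t - j + k - 1) :=
  Cq_recurrence_general q k r hk hr s t hs ht
end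

section
/- Let W be the waiting time for the r-th occurrence of an overlapping success run of length k (Type III counting) in a q-geometric sequence of binary trials. Then P(W = k+r-1) = θ^{k+r-1}, P(W = n) = 0 for n < k+r-1, and for n > k+r-1, P(W = n) = Σ_{t=k}^{k+r-1} Σ_i θ^{n-i} q^{it} (Π_{j=1}^{i}(1-θq^{j-1})) · C_q^k(i, n-t-i, r - C(t)), where C(t) = t-k+1 for t ≥ k and the inner sum is over the admissible range of the number of failures i. -/
open Finset

/-- Probability of a finite binary word under the q-geometric model:
given `f` previous failures, a trial succeeds with probability `θ * q ^ f`. -/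
def wordProb (θ q : ℝ) (w : List Bool) : ℝ :=
  (w.foldl
    (fun (pf : ℝ × ℕ) b =>
      if b then (pf.1 * (θ * q ^ pf.2), pf.2)
      else (pf.1 * (1 - θ * q ^ pf.2), pf.2 + 1))
    (1, 0)).1

/-- Lengths of the maximal runs of `true`s in a word (including the final, possibly
empty, ongoing run). -/
def oneRuns (w : List Bool) : List ℕ :=
  let p := w.foldl
    (fun (ac : List ℕ × ℕ) b => if b then (ac.1, ac.2 + 1) else (ac.2 :: ac.1, 0))
    (([] : List ℕ), 0)
  p.2 :: p.1

/-- Type III (overlapping) count: a run of `m ≥ k` ones accounts for `m-k+1` runs. -/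
def countIII (k : ℕ) (w : List Bool) : ℕ := ((oneRuns w).map (fun y => y - (k - 1))).sum

/-- Probability that the waiting time for the `r`-th occurrence (w.r.t. the counting
function `count`) equals `n`: the count reaches `r` at trial `n` and was `r-1` at `n-1`. -/
def probW (θ q : ℝ) (count : List Bool → ℕ) (r n : ℕ) : ℝ :=
  ∑ w : Fin n → Bool,
    if count (List.ofFn w) = r ∧ count ((List.ofFn w).take (n - 1)) = r - 1 then
      wordProb θ q (List.ofFn w)
    else 0

/-!
A word of length `n` is determined by its runs of successes: `i` interior runs `y₁, …, yᵢ`,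
each closed by a failure, and a final run `t`. Before the `j`-th failure a success has
probability `θ q^(j-1)`, so the word has probability
`θ^(n-i) q^(y₂ + 2y₃ + ⋯ + (i-1)yᵢ + i t) ∏_{j<i} (1 - θ q^j)`.
The count reaches `r` exactly at the last trial iff that trial is a success completing a
run of length `t ≥ k` and the count before it was `r - 1`, i.e. iff `k ≤ t ≤ k + r - 1`
and the interior runs contribute `r - (t - k + 1)`: the constraint defining `Cqsum`.
This constraint also forces `k + r - 1 + i ≤ n < (i + 1) k + r`, which gives the vanishing
below `k + r - 1`, the single all-success word at `n = k + r - 1`, and the range of `i`.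
-/

lemma List.ofFn_getD_of_length_eq {α : Type*} {l : List α} {n : ℕ} (h : l.length = n) (d : α) :
    List.ofFn (fun j : Fin n => l.getD j d) = l := by
  subst h
  simp

lemma List.sum_map_tsub_le_sum (c : ℕ) (L : List ℕ) : (L.map (· - c)).sum ≤ L.sum := by
  induction L with
  | nil => simp
  | cons a L ih => simp only [List.map_cons, List.sum_cons]; omega

lemma List.sum_le_length_mul_add_sum_map_tsub (c : ℕ) (L : List ℕ) :
    L.sum ≤ L.length * c + (L.map (· - c)).sum := by
  induction L with
  | nil => simp
  | cons a L ih => simp only [List.map_cons, List.sum_cons, List.length_cons, Nat.succ_mul]; omega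

def ofRuns : List ℕ → ℕ → List Bool
  | [], t => List.replicate t true
  | y :: L, t => List.replicate y true ++ false :: ofRuns L t

lemma ofRuns_succ (L : List ℕ) (t : ℕ) : ofRuns L (t + 1) = ofRuns L t ++ [true] := by
  induction L with
  | nil => simp [ofRuns, List.replicate_succ']
  | cons y L ih => simp [ofRuns, ih]

lemma ofRuns_concat_zero (L : List ℕ) (a : ℕ) :
    ofRuns (L ++ [a]) 0 = ofRuns L a ++ [false] := by
  induction L with
  | nil => simp [ofRuns]
  | cons y L ih => simp [ofRuns, ih]

lemma length_ofRuns (L : List ℕ) (t : ℕ) : (ofRuns L t).length = L.sum + L.length + t := by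
  induction L with
  | nil => simp [ofRuns]
  | cons y L ih =>
    simp only [ofRuns, List.length_append, List.length_replicate, List.length_cons, ih,
      List.sum_cons]
    omega

lemma count_false_ofRuns (L : List ℕ) (t : ℕ) : (ofRuns L t).count false = L.length := by
  induction L with
  | nil => simp [ofRuns, List.count_replicate]
  | cons y L ih => simp [ofRuns, ih, List.count_replicate]

def finalRun (w : List Bool) : ℕ := (oneRuns w).headI

def interiorRuns (w : List Bool) : List ℕ := (oneRuns w).tail.reverse

lemma oneRuns_eq_finalRun_cons (w : List Bool) :
    oneRuns w = finalRun w :: (interiorRuns w).reverse := by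
  simp [finalRun, interiorRuns, oneRuns]

lemma finalRun_concat_true (w : List Bool) : finalRun (w ++ [true]) = finalRun w + 1 := by
  simp [finalRun, oneRuns, List.foldl_append]

lemma interiorRuns_concat_true (w : List Bool) :
    interiorRuns (w ++ [true]) = interiorRuns w := by
  simp [interiorRuns, oneRuns, List.foldl_append]

lemma finalRun_concat_false (w : List Bool) : finalRun (w ++ [false]) = 0 := by
  simp [finalRun, oneRuns, List.foldl_append]

lemma interiorRuns_concat_false (w : List Bool) :
    interiorRuns (w ++ [false]) = interiorRuns w ++ [finalRun w] := by
  simp [interiorRuns, finalRun, oneRuns, List.foldl_append]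

lemma ofRuns_interiorRuns_finalRun (w : List Bool) : ofRuns (interiorRuns w) (finalRun w) = w := by
  induction w using List.reverseRecOn with
  | nil => rfl
  | append_singleton w b ih =>
    cases b
    · rw [interiorRuns_concat_false, finalRun_concat_false, ofRuns_concat_zero, ih]
    · rw [interiorRuns_concat_true, finalRun_concat_true, ofRuns_succ, ih]

@[simp] lemma finalRun_ofRuns (L : List ℕ) (t : ℕ) : finalRun (ofRuns L t) = t := by
  induction t with
  | zero =>
    rcases List.eq_nil_or_concat L with rfl | ⟨L, a, rfl⟩
    · rfl
    · rw [List.concat_eq_append, ofRuns_concat_zero, finalRun_concat_false]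
  | succ t ih => rw [ofRuns_succ, finalRun_concat_true, ih]

@[simp] lemma interiorRuns_ofRuns (L : List ℕ) (t : ℕ) : interiorRuns (ofRuns L t) = L := by
  induction L using List.reverseRecOn generalizing t with
  | nil => induction t with
    | zero => rfl
    | succ t ih => rw [ofRuns_succ, interiorRuns_concat_true, ih]
  | append_singleton L a ih => induction t with
    | zero => rw [ofRuns_concat_zero, interiorRuns_concat_false, ih, finalRun_ofRuns]
    | succ t ih' => rw [ofRuns_succ, interiorRuns_concat_true, ih']

lemma wordProb_concat (θ q : ℝ) (w : List Bool) (b : Bool) :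
    wordProb θ q (w ++ [b]) =
      wordProb θ q w * (if b then θ * q ^ w.count false else 1 - θ * q ^ w.count false) := by
  have hfailures : ∀ w : List Bool, (w.foldl (fun (pf : ℝ × ℕ) b =>
      if b then (pf.1 * (θ * q ^ pf.2), pf.2) else (pf.1 * (1 - θ * q ^ pf.2), pf.2 + 1))
      (1, 0)).2 = w.count false := by
    intro w
    induction w using List.reverseRecOn with
    | nil => rfl
    | append_singleton w b ih => cases b <;> simp [List.foldl_append, ih]
  cases b <;> simp [wordProb, List.foldl_append, hfailures]

def runWeight (L : List ℕ) : ℕ := ∑ j ∈ range L.length, j * L.getD j 0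

lemma runWeight_concat (L : List ℕ) (a : ℕ) :
    runWeight (L ++ [a]) = runWeight L + L.length * a := by
  rw [runWeight, List.length_append, List.length_singleton, sum_range_succ]
  congr 1
  · exact sum_congr rfl fun j hj => by rw [List.getD_append _ _ _ _ (mem_range.1 hj)]
  · simp

lemma wordProb_ofRuns_succ (θ q : ℝ) (L : List ℕ) (t : ℕ) :
    wordProb θ q (ofRuns L (t + 1)) = wordProb θ q (ofRuns L t) * (θ * q ^ L.length) := by
  rw [ofRuns_succ, wordProb_concat, if_pos rfl, count_false_ofRuns]

lemma wordProb_ofRuns (θ q : ℝ) (L : List ℕ) (t : ℕ) :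
    wordProb θ q (ofRuns L t) = θ ^ (L.sum + t) * q ^ (runWeight L + L.length * t) *
      ∏ j ∈ range L.length, (1 - θ * q ^ j) := by
  induction L using List.reverseRecOn generalizing t with
  | nil => induction t with
    | zero => simp [ofRuns, wordProb, runWeight]
    | succ t ih => rw [wordProb_ofRuns_succ, ih]; ring
  | append_singleton L a ih => induction t with
    | zero =>
      rw [ofRuns_concat_zero, wordProb_concat, if_neg Bool.false_ne_true, count_false_ofRuns, ih,
        runWeight_concat, List.sum_append, List.sum_singleton, List.length_append,
        List.length_singleton, prod_range_succ]
      ring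
    | succ t ih' => rw [wordProb_ofRuns_succ, ih']; ring

lemma runWeight_ofFn {m : ℕ} (y : Fin m → ℕ) :
    runWeight (List.ofFn y) = ∑ j : Fin m, j * y j := by
  rw [runWeight, List.length_ofFn, ← Fin.sum_univ_eq_sum_range]
  simp

lemma countIII_ofRuns (k : ℕ) (L : List ℕ) (t : ℕ) :
    countIII k (ofRuns L t) = t - (k - 1) + (L.map (· - (k - 1))).sum := by
  rw [countIII, oneRuns_eq_finalRun_cons, interiorRuns_ofRuns, finalRun_ofRuns]
  simp [List.sum_reverse]

def IsWaitingWord (k r : ℕ) (w : List Bool) : Prop :=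
  countIII k w = r ∧ countIII k w.dropLast = r - 1

instance (k r : ℕ) : DecidablePred (IsWaitingWord k r) :=
  fun _ => inferInstanceAs (Decidable (_ ∧ _))

lemma isWaitingWord_ofRuns_iff {k r : ℕ} (hk : 0 < k) (hr : 0 < r) (L : List ℕ) (t : ℕ) :
    IsWaitingWord k r (ofRuns L t) ↔
      k ≤ t ∧ t ≤ k + r - 1 ∧ (L.map (· - (k - 1))).sum = r - (t - (k - 1)) := by
  rcases t with _ | t
  · -- a word ending in a failure (or empty) has the same count as its prefix
    simp only [IsWaitingWord, nonpos_iff_eq_zero, hk.ne', false_and, iff_false, not_and]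
    rcases List.eq_nil_or_concat L with rfl | ⟨L, a, rfl⟩
    · rw [show ofRuns [] 0 = [] from rfl, List.dropLast_nil]
      omega
    · rw [List.concat_eq_append, countIII_ofRuns, ofRuns_concat_zero, List.dropLast_concat,
        countIII_ofRuns]
      simp only [List.map_append, List.sum_append, List.map_singleton, List.sum_singleton]
      omega
  · rw [IsWaitingWord, countIII_ofRuns, ofRuns_succ, List.dropLast_concat, countIII_ofRuns]
    omega

lemma isWaitingWord_iff {k r : ℕ} (hk : 0 < k) (hr : 0 < r) (w : List Bool) :
    IsWaitingWord k r w ↔ k ≤ finalRun w ∧ finalRun w ≤ k + r - 1 ∧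
      ((interiorRuns w).map (· - (k - 1))).sum = r - (finalRun w - (k - 1)) := by
  conv_lhs => rw [← ofRuns_interiorRuns_finalRun w]
  exact isWaitingWord_ofRuns_iff hk hr _ _

lemma length_bounds_of_isWaitingWord {k r : ℕ} (hk : 0 < k) (hr : 0 < r) {w : List Bool}
    (hw : IsWaitingWord k r w) :
    k + r - 1 + (interiorRuns w).length ≤ w.length ∧
      w.length < ((interiorRuns w).length + 1) * k + r := by
  obtain ⟨htk, htr, hcount⟩ := (isWaitingWord_iff hk hr w).1 hw
  set L := interiorRuns w
  have hlength := length_ofRuns L (finalRun w)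
  rw [ofRuns_interiorRuns_finalRun] at hlength
  have hlow := L.sum_map_tsub_le_sum (k - 1)
  have hhigh := L.sum_le_length_mul_add_sum_map_tsub (k - 1)
  have hmul : L.length * (k - 1) + L.length = L.length * k := by
    rw [← Nat.mul_add_one, Nat.sub_add_cancel hk]
  rw [Nat.add_one_mul]
  constructor <;> omega

lemma eq_replicate_of_isWaitingWord {k r : ℕ} (hk : 0 < k) (hr : 0 < r) {w : List Bool}
    (hw : IsWaitingWord k r w) (hlen : w.length = k + r - 1) :
    w = List.replicate (k + r - 1) true := by
  have hbound := (length_bounds_of_isWaitingWord hk hr hw).1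
  have hword := ofRuns_interiorRuns_finalRun w
  rw [List.length_eq_zero_iff.1 (by omega : (interiorRuns w).length = 0)] at hword
  have hfin := length_ofRuns [] (finalRun w)
  rw [hword] at hfin
  simp only [List.sum_nil, List.length_nil, zero_add] at hfin
  rw [← hword, ← hlen, hfin]
  rfl

def interiorRunsFin (i : ℕ) (w : List Bool) : Fin i → ℕ := fun j => (interiorRuns w).getD j 0

lemma ofFn_interiorRunsFin {i : ℕ} {w : List Bool} (hlen : (interiorRuns w).length = i) :
    List.ofFn (interiorRunsFin i w) = interiorRuns w :=
  List.ofFn_getD_of_length_eq hlen 0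

lemma sums_interiorRunsFin_of_isWaitingWord {k r i : ℕ} (hk : 0 < k) (hr : 0 < r)
    {w : List Bool} (hw : IsWaitingWord k r w) (hlen : (interiorRuns w).length = i) :
    ∑ j, interiorRunsFin i w j = w.length - finalRun w - i ∧
      ∑ j, (interiorRunsFin i w j - (k - 1)) = r - (finalRun w - (k - 1)) := by
  have hlength := length_ofRuns (interiorRuns w) (finalRun w)
  rw [ofRuns_interiorRuns_finalRun, hlen] at hlength
  rw [isWaitingWord_iff hk hr, ← ofFn_interiorRunsFin hlen, List.map_ofFn, List.sum_ofFn] at hw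
  rw [← List.sum_ofFn, ofFn_interiorRunsFin hlen]
  exact ⟨by omega, hw.2.2⟩

def ofRunsFin (n : ℕ) {i : ℕ} (y : Fin i → ℕ) (t : ℕ) : Fin n → Bool :=
  fun j => (ofRuns (List.ofFn y) t).getD j false

lemma ofFn_ofRunsFin {n i t : ℕ} {y : Fin i → ℕ} (hy : ∑ j, y j + i + t = n) :
    List.ofFn (ofRunsFin n y t) = ofRuns (List.ofFn y) t :=
  List.ofFn_getD_of_length_eq (by rw [length_ofRuns, List.sum_ofFn, List.length_ofFn, hy]) false

lemma sum_wordProb_waitingWords_fiber (θ q : ℝ) {k r n t i : ℕ} (hk : 0 < k) (hr : 0 < r)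
    (htk : k ≤ t) (htr : t ≤ k + r - 1) (hti : t + i ≤ n) :
    ∑ w ∈ ({w : Fin n → Bool | IsWaitingWord k r (List.ofFn w)} : Finset _) with
        (finalRun (List.ofFn w), (interiorRuns (List.ofFn w)).length) = (t, i),
      wordProb θ q (List.ofFn w) =
    θ ^ (n - i) * q ^ (i * t) * (∏ j ∈ range i, (1 - θ * q ^ j)) *
      Cqsum q k i (n - t - i) (r - (t - (k - 1))) := by
  rw [Cqsum, mul_sum]
  refine sum_nbij' (fun w => interiorRunsFin i (List.ofFn w)) (fun y => ofRunsFin n y t)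
    ?_ ?_ ?_ ?_ ?_
  · intro w hw
    simp only [mem_filter, mem_univ, true_and, Prod.mk.injEq] at hw
    obtain ⟨hwait, rfl, hlen⟩ := hw
    have hsums := sums_interiorRunsFin_of_isWaitingWord hk hr hwait hlen
    rw [List.length_ofFn] at hsums
    simp only [mem_filter, Fintype.mem_piFinset, mem_range]
    refine ⟨fun j => ?_, hsums⟩
    have := single_le_sum (fun j _ => Nat.zero_le (interiorRunsFin i (List.ofFn w) j)) (mem_univ j)
    omega
  · intro y hy
    simp only [mem_filter, Fintype.mem_piFinset, mem_range] at hy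
    simp only [mem_filter, mem_univ, true_and, ofFn_ofRunsFin (by omega : ∑ j, y j + i + t = n),
      isWaitingWord_ofRuns_iff hk hr, interiorRuns_ofRuns, finalRun_ofRuns, List.length_ofFn,
      List.map_ofFn, List.sum_ofFn, and_true]
    exact ⟨htk, htr, hy.2.2⟩
  · intro w hw
    simp only [mem_filter, mem_univ, true_and, Prod.mk.injEq] at hw
    funext j
    simp [ofRunsFin, ofFn_interiorRunsFin hw.2.2, ← hw.2.1, ofRuns_interiorRuns_finalRun]
  · intro y hy
    simp only [mem_filter] at hy
    funext j
    simp [interiorRunsFin, ofFn_ofRunsFin (by omega : ∑ j, y j + i + t = n)]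
  · intro w hw
    simp only [mem_filter, mem_univ, true_and, Prod.mk.injEq] at hw
    obtain ⟨hwait, rfl, hlen⟩ := hw
    have hsum := (sums_interiorRunsFin_of_isWaitingWord hk hr hwait hlen).1
    rw [List.length_ofFn] at hsum
    conv_lhs => rw [← ofRuns_interiorRuns_finalRun (List.ofFn w)]
    rw [wordProb_ofRuns, ← ofFn_interiorRunsFin hlen, runWeight_ofFn, List.sum_ofFn, hsum,
      List.length_ofFn,
      show n - finalRun (List.ofFn w) - i + finalRun (List.ofFn w) = n - i by omega]
    ring

lemma probW_countIII_eq_sum (θ q : ℝ) (k r n : ℕ) :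
    probW θ q (countIII k) r n =
      ∑ w : Fin n → Bool with IsWaitingWord k r (List.ofFn w), wordProb θ q (List.ofFn w) := by
  rw [probW, sum_filter]
  simp [IsWaitingWord, List.dropLast_eq_take]

lemma probW_countIII_eq_zero_of_lt {θ q : ℝ} {k r n : ℕ} (hk : 0 < k) (hr : 0 < r)
    (hn : n < k + r - 1) : probW θ q (countIII k) r n = 0 := by
  rw [probW_countIII_eq_sum]
  refine sum_eq_zero fun w hw => ?_
  have hlen := (length_bounds_of_isWaitingWord hk hr (mem_filter.1 hw).2).1
  rw [List.length_ofFn] at hlen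
  omega

lemma probW_countIII_earliest (θ q : ℝ) {k r : ℕ} (hk : 0 < k) (hr : 0 < r) :
    probW θ q (countIII k) r (k + r - 1) = θ ^ (k + r - 1) := by
  have hall : List.ofFn (fun _ : Fin (k + r - 1) => true) = ofRuns [] (k + r - 1) :=
    List.ofFn_const _ _
  rw [probW_countIII_eq_sum, sum_eq_single_of_mem (fun _ => true)]
  · simp [hall, wordProb_ofRuns, runWeight]
  · simp only [mem_filter, mem_univ, true_and, hall, isWaitingWord_ofRuns_iff hk hr,
      List.map_nil, List.sum_nil]
    omega
  · intro w hw hne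
    refine absurd (List.ofFn_injective ?_) hne
    rw [eq_replicate_of_isWaitingWord hk hr (mem_filter.1 hw).2 List.length_ofFn, List.ofFn_const]

lemma probW_countIII_of_gt (θ q : ℝ) {k r n : ℕ} (hk : 0 < k) (hr : 0 < r)
    (hn : k + r - 1 < n) :
    probW θ q (countIII k) r n =
      ∑ t ∈ Icc k (k + r - 1), ∑ i ∈ Icc ((n - k - r) / k + 1) (n - (k + r - 1)),
        θ ^ (n - i) * q ^ (i * t) * (∏ j ∈ range i, (1 - θ * q ^ j)) *
          Cqsum q k i (n - t - i) (r - (t - (k - 1))) := by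
  rw [probW_countIII_eq_sum, ← sum_product',
    ← sum_fiberwise_of_maps_to (g := fun w : Fin n → Bool =>
      (finalRun (List.ofFn w), (interiorRuns (List.ofFn w)).length))
      (t := Icc k (k + r - 1) ×ˢ Icc ((n - k - r) / k + 1) (n - (k + r - 1))) (fun w hw => ?_)]
  · refine sum_congr rfl fun ⟨t, i⟩ hti => ?_
    simp only [mem_product, mem_Icc] at hti
    exact sum_wordProb_waitingWords_fiber θ q hk hr hti.1.1 hti.1.2 (by omega)
  · have hwait := (mem_filter.1 hw).2
    have hrun := (isWaitingWord_iff hk hr _).1 hwait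
    have hlen := length_bounds_of_isWaitingWord hk hr hwait
    rw [List.length_ofFn, Nat.add_one_mul] at hlen
    simp only [mem_product, mem_Icc, Nat.add_one_le_iff, Nat.div_lt_iff_lt_mul hk]
    exact ⟨⟨hrun.1, hrun.2.1⟩, by omega, by omega⟩

theorem typeIII_q_negBinomial_general (θ q : ℝ) (k r : ℕ) (hk : 0 < k) (hr : 0 < r) :
    (∀ n, n < k + r - 1 → probW θ q (countIII k) r n = 0) ∧
    probW θ q (countIII k) r (k + r - 1) = θ ^ (k + r - 1) ∧
    (∀ n, k + r - 1 < n →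
      probW θ q (countIII k) r n =
        ∑ t ∈ Finset.Icc k (k + r - 1),
          ∑ i ∈ Finset.Icc ((n - k - r) / k + 1) (n - (k + r - 1)),
            θ ^ (n - i) * q ^ (i * t) * (∏ j ∈ Finset.range i, (1 - θ * q ^ j)) *
              Cqsum q k i (n - t - i) (r - (t - (k - 1)))) :=
  ⟨fun _ hn => probW_countIII_eq_zero_of_lt hk hr hn, probW_countIII_earliest θ q hk hr,
    fun _ hn => probW_countIII_of_gt θ q hk hr hn⟩

theorem typeIII_q_negBinomial (θ q : ℝ) (hθ0 : 0 < θ) (hθ1 : θ ≤ 1)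
    (hq0 : 0 < q) (hq1 : q < 1) (k r : ℕ) (hk : 0 < k) (hr : 0 < r) :
    (∀ n, n < k + r - 1 → probW θ q (countIII k) r n = 0) ∧
    probW θ q (countIII k) r (k + r - 1) = θ ^ (k + r - 1) ∧
    (∀ n, k + r - 1 < n →
      probW θ q (countIII k) r n =
        ∑ t ∈ Finset.Icc k (k + r - 1),
          ∑ i ∈ Finset.Icc ((n - k - r) / k + 1) (n - (k + r - 1)),
            θ ^ (n - i) * q ^ (i * t) * (∏ j ∈ Finset.range i, (1 - θ * q ^ j)) *
              Cqsum q k i (n - t - i) (r - (t - (k - 1)))) :=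
  typeIII_q_negBinomial_general θ q k r hk hr
end

section
/- Let Z_n be the number of successes in n trials of the q-geometric model with P(X_j = 0 | F_{j-1} = i-1) = 1 - θq^{i-1}, where F_{j-1} is the number of failures among the first j-1 trials, 0 ≤ θ ≤ 1, 0 < q < 1. Then P(Z_n = r) = [n choose r]_q · θ^r · Π_{i=1}^{n-r}(1 - θq^{i-1}) for r = 0,1,...,n, where [n choose r]_q is the q-binomial coefficient. In particular these probabilities sum to 1 over r = 0,...,n, i.e. Σ_{r=0}^{n} [n choose r]_q θ^r Π_{i=1}^{n-r}(1 - θq^{i-1}) = 1. -/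
open Finset

/-- Probability that the number of successes among the `n` trials equals `r`. -/
def probZ (θ q : ℝ) (n r : ℕ) : ℝ :=
  ∑ w : Fin n → Bool,
    if (List.ofFn w).count true = r then wordProb θ q (List.ofFn w) else 0

/-- The `q`-binomial coefficient `[n choose r]_q = (q;q)_n / ((q;q)_r (q;q)_{n-r})`. -/
noncomputable def qbinom (q : ℝ) (n r : ℕ) : ℝ :=
  (∏ i ∈ Finset.range n, (1 - q ^ (i + 1))) /
    ((∏ i ∈ Finset.range r, (1 - q ^ (i + 1))) *
      (∏ i ∈ Finset.range (n - r), (1 - q ^ (i + 1))))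

/-
Conditioning on the first trial: a success (probability `θ`) leaves the model unchanged, while
a failure (probability `1 - θ`) turns it into the same model with `θ` replaced by `θ q`, since
every later success probability acquires one more factor `q`. Hence
`P_θ(Z_{n+1} = r+1) = θ P_θ(Z_n = r) + (1 - θ) P_{θq}(Z_n = r+1)`, and the closed form obeys the
same recursion by the `q`-Pascal rule `[n+1, r+1]_q = [n, r]_q + q^{r+1} [n, r+1]_q` together
with `∏_{i<k+1} (1 - θ q^i) = (1 - θ) ∏_{i<k} (1 - θ q q^i)`. The probabilities sum to one
because the probabilities of all words of length `n` do.
-/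

lemma Fintype.sum_ofFn_succ {α M : Type*} [Fintype α] [AddCommMonoid M] (n : ℕ)
    (F : List α → M) :
    ∑ w : Fin (n + 1) → α, F (List.ofFn w) = ∑ a, ∑ w : Fin n → α, F (a :: List.ofFn w) := by
  rw [← (Fin.consEquiv fun _ => α).sum_comp, Fintype.sum_prod_type]
  simp

lemma List.count_ofFn_le {α : Type*} [BEq α] (a : α) {n : ℕ} (w : Fin n → α) :
    (List.ofFn w).count a ≤ n :=
  (List.count_le_length ..).trans_eq (List.length_ofFn ..)

/-- `(q;q)_k`. -/
noncomputable def qPochhammer (q : ℝ) (k : ℕ) : ℝ := ∏ i ∈ Finset.range k, (1 - q ^ (i + 1))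

section QBinom

variable {q : ℝ}

lemma qbinom_eq_qPochhammer (n r : ℕ) :
    qbinom q n r = qPochhammer q n / (qPochhammer q r * qPochhammer q (n - r)) := rfl

lemma qPochhammer_zero : qPochhammer q 0 = 1 := Finset.prod_range_zero _

lemma qPochhammer_succ (k : ℕ) : qPochhammer q (k + 1) = qPochhammer q k * (1 - q ^ (k + 1)) :=
  Finset.prod_range_succ ..

lemma one_sub_pow_succ_ne_zero (hq0 : 0 ≤ q) (hq1 : q < 1) (k : ℕ) : 1 - q ^ (k + 1) ≠ 0 :=
  sub_ne_zero.2 (pow_lt_one₀ hq0 hq1 k.succ_ne_zero).ne'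

lemma qPochhammer_ne_zero (hq0 : 0 ≤ q) (hq1 : q < 1) (k : ℕ) : qPochhammer q k ≠ 0 :=
  Finset.prod_ne_zero_iff.2 fun i _ => one_sub_pow_succ_ne_zero hq0 hq1 i

lemma qbinom_zero_right (hq0 : 0 ≤ q) (hq1 : q < 1) (n : ℕ) : qbinom q n 0 = 1 := by
  simp [qbinom_eq_qPochhammer, qPochhammer_zero, qPochhammer_ne_zero hq0 hq1]

lemma qbinom_self (hq0 : 0 ≤ q) (hq1 : q < 1) (n : ℕ) : qbinom q n n = 1 := by
  simp [qbinom_eq_qPochhammer, qPochhammer_zero, qPochhammer_ne_zero hq0 hq1]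

lemma qbinom_succ_succ (hq0 : 0 ≤ q) (hq1 : q < 1) {n r : ℕ} (h : r < n) :
    qbinom q (n + 1) (r + 1) = qbinom q n r + q ^ (r + 1) * qbinom q n (r + 1) := by
  obtain ⟨m, rfl⟩ := Nat.exists_eq_add_of_lt h
  have hm₁ : r + m + 1 + 1 - (r + 1) = m + 1 := by omega
  have hm₂ : r + m + 1 - r = m + 1 := by omega
  have hm₃ : r + m + 1 - (r + 1) = m := by omega
  rw [qbinom_eq_qPochhammer, qbinom_eq_qPochhammer, qbinom_eq_qPochhammer, hm₁, hm₂, hm₃,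
    qPochhammer_succ (r + m + 1), qPochhammer_succ r, qPochhammer_succ m]
  have := qPochhammer_ne_zero hq0 hq1 (r + m + 1)
  have := qPochhammer_ne_zero hq0 hq1 r
  have := qPochhammer_ne_zero hq0 hq1 m
  have := one_sub_pow_succ_ne_zero hq0 hq1 r
  have := one_sub_pow_succ_ne_zero hq0 hq1 m
  field_simp
  ring

end QBinom

lemma prod_range_succ_one_sub_mul_pow (θ q : ℝ) (k : ℕ) :
    ∏ i ∈ Finset.range (k + 1), (1 - θ * q ^ i) =
      (1 - θ) * ∏ i ∈ Finset.range k, (1 - θ * q * q ^ i) := by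
  rw [Finset.prod_range_succ', pow_zero, mul_one, mul_comm]
  exact congrArg _ (Finset.prod_congr rfl fun i _ => by ring)

lemma foldl_wordProb_step (q : ℝ) (w : List Bool) (θ c : ℝ) (f : ℕ) :
    (w.foldl (fun (pf : ℝ × ℕ) b =>
      if b then (pf.1 * (θ * q ^ pf.2), pf.2)
      else (pf.1 * (1 - θ * q ^ pf.2), pf.2 + 1)) (c, f)).1
    = c * wordProb (θ * q ^ f) q w := by
  induction w generalizing θ c f with
  | nil => simp [wordProb]
  | cons b t ih =>
    cases b <;> simp only [wordProb, List.foldl_cons, Bool.false_eq_true, if_true, if_false] <;>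
      rw [ih, ih] <;> ring_nf

lemma wordProb_cons (θ q : ℝ) (b : Bool) (w : List Bool) :
    wordProb θ q (b :: w) =
      if b then θ * wordProb θ q w else (1 - θ) * wordProb (θ * q) q w := by
  cases b <;> simp only [wordProb, List.foldl_cons, Bool.false_eq_true, if_true, if_false] <;>
    rw [foldl_wordProb_step] <;> simp [wordProb]

lemma sum_wordProb_ofFn (θ q : ℝ) (n : ℕ) :
    ∑ w : Fin n → Bool, wordProb θ q (List.ofFn w) = 1 := by
  induction n generalizing θ with
  | zero => simp [wordProb]
  | succ n ih =>
    simp only [Fintype.sum_ofFn_succ, Fintype.sum_bool, wordProb_cons, if_true,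
      Bool.false_eq_true, if_false, ← Finset.mul_sum, ih]
    ring

lemma probZ_of_lt (θ q : ℝ) {n r : ℕ} (h : n < r) : probZ θ q n r = 0 :=
  Finset.sum_eq_zero fun w _ => if_neg ((List.count_ofFn_le true w).trans_lt h).ne

lemma probZ_succ (θ q : ℝ) (n r : ℕ) :
    probZ θ q (n + 1) r =
      (∑ w : Fin n → Bool,
        if (List.ofFn w).count true + 1 = r then θ * wordProb θ q (List.ofFn w) else 0) +
      (1 - θ) * probZ (θ * q) q n r := by
  rw [probZ, Fintype.sum_ofFn_succ n
    (fun l => if l.count true = r then wordProb θ q l else 0), Fintype.sum_bool, probZ,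
    Finset.mul_sum]
  simp [wordProb_cons, mul_ite]

lemma probZ_succ_zero (θ q : ℝ) (n : ℕ) :
    probZ θ q (n + 1) 0 = (1 - θ) * probZ (θ * q) q n 0 := by
  simp [probZ_succ]

lemma probZ_succ_succ (θ q : ℝ) (n r : ℕ) :
    probZ θ q (n + 1) (r + 1) = θ * probZ θ q n r + (1 - θ) * probZ (θ * q) q n (r + 1) := by
  rw [probZ_succ, probZ.eq_def θ q n r, Finset.mul_sum]
  simp [mul_ite]

lemma sum_probZ (θ q : ℝ) (n : ℕ) : ∑ r ∈ Finset.range (n + 1), probZ θ q n r = 1 := by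
  rw [← sum_wordProb_ofFn θ q n]
  unfold probZ
  rw [Finset.sum_comm]
  refine Finset.sum_congr rfl fun w _ => ?_
  rw [Finset.sum_ite_eq, if_pos (Finset.mem_range_succ_iff.2 (List.count_ofFn_le true w))]

lemma probZ_eq_qbinom_mul {q : ℝ} (hq0 : 0 ≤ q) (hq1 : q < 1) (θ : ℝ) {n r : ℕ} (h : r ≤ n) :
    probZ θ q n r = qbinom q n r * θ ^ r * ∏ i ∈ Finset.range (n - r), (1 - θ * q ^ i) := by
  induction n generalizing θ r with
  | zero =>
    obtain rfl := Nat.le_zero.1 h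
    simp [probZ, wordProb, qbinom_zero_right hq0 hq1]
  | succ n ih =>
    rcases r with _ | r
    · rw [probZ_succ_zero, ih _ n.zero_le, qbinom_zero_right hq0 hq1,
        qbinom_zero_right hq0 hq1, Nat.sub_zero, Nat.sub_zero, prod_range_succ_one_sub_mul_pow]
      ring
    rcases (Nat.lt_succ_iff.1 h).lt_or_eq with hr | rfl
    · have hnr : n - r = n - (r + 1) + 1 := by omega
      rw [probZ_succ_succ, ih θ hr.le, ih (θ * q) (r := r + 1) hr, qbinom_succ_succ hq0 hq1 hr,
        Nat.add_sub_add_right, hnr, prod_range_succ_one_sub_mul_pow]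
      ring
    · rw [probZ_succ_succ, ih θ le_rfl, probZ_of_lt _ _ r.lt_succ_self, qbinom_self hq0 hq1,
        qbinom_self hq0 hq1]
      simp [pow_succ, mul_comm]

theorem q_binomial_distribution_general (θ q : ℝ) (hq0 : 0 < q) (hq1 : q < 1) (n : ℕ) :
    (∀ r ≤ n, probZ θ q n r =
      qbinom q n r * θ ^ r * ∏ i ∈ Finset.range (n - r), (1 - θ * q ^ i)) ∧
    (∑ r ∈ Finset.range (n + 1),
      qbinom q n r * θ ^ r * ∏ i ∈ Finset.range (n - r), (1 - θ * q ^ i)) = 1 := by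
  have hformula : ∀ r ≤ n, probZ θ q n r =
      qbinom q n r * θ ^ r * ∏ i ∈ Finset.range (n - r), (1 - θ * q ^ i) :=
    fun r => probZ_eq_qbinom_mul hq0.le hq1 θ
  refine ⟨hformula, ?_⟩
  refine (Finset.sum_congr rfl fun r hr => ?_).trans (sum_probZ θ q n)
  exact (hformula r (Finset.mem_range_succ_iff.1 hr)).symm

theorem q_binomial_distribution (θ q : ℝ) (hθ0 : 0 ≤ θ) (hθ1 : θ ≤ 1)
    (hq0 : 0 < q) (hq1 : q < 1) (n : ℕ) :
    (∀ r ≤ n, probZ θ q n r =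
      qbinom q n r * θ ^ r * ∏ i ∈ Finset.range (n - r), (1 - θ * q ^ i)) ∧
    (∑ r ∈ Finset.range (n + 1),
      qbinom q n r * θ ^ r * ∏ i ∈ Finset.range (n - r), (1 - θ * q ^ i)) = 1 :=
  q_binomial_distribution_general θ q hq0 hq1 n
end
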